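/- arXiv:2009.01430 — 11 statements merged into one kernel-verified Lean document; each statement's English description precedes it below -/
import Mathlib

section
/- Under the list-experiment model with misreporting (Assumptions 1 and 2), for every j with 1 ≤ j ≤ J the observed treatment-group probabilities satisfy P₁(j) = ((1−p₁)/(1−p₀))·(δ·P₀(j−1) + (1−δ)·P₀(j) − p₀/(J+1)) + p₁/(J+2). (Proposition 1, middle cases.) -/
/-- Undoing the uniform misreporting `x ↦ a * x + c` commutes with taking the `δ`-mixture. -/
lemma mix_eq_of_eq_mul_add {a c u v x y : ℝ} (δ : ℝ) (ha : a ≠ 0)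
    (hx : x = a * u + c) (hy : y = a * v + c) :
    δ * u + (1 - δ) * v = (δ * x + (1 - δ) * y - c) / a := by
  subst hx hy
  field_simp
  ring

theorem list_experiment_prop1_middle_cases_general
    (J : ℕ)
    (P : ℤ → ℝ)
    (δ p₀ p₁ : ℝ)
    (hp₀ : 0 ≤ p₀ ∧ p₀ < 1)
    (P₀ P₁ : ℤ → ℝ)
    (hP₀ : ∀ j : ℤ, 0 ≤ j → j ≤ (J : ℤ) →
      P₀ j = (1 - p₀) * P j + p₀ / ((J : ℝ) + 1))
    (hP₁ : ∀ j : ℤ, 0 ≤ j → j ≤ (J : ℤ) + 1 →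
      P₁ j = (1 - p₁) * (δ * P (j - 1) + (1 - δ) * P j) + p₁ / ((J : ℝ) + 2)) :
    ∀ j : ℤ, 1 ≤ j → j ≤ (J : ℤ) →
      P₁ j = (1 - p₁) / (1 - p₀) *
          (δ * P₀ (j - 1) + (1 - δ) * P₀ j - p₀ / ((J : ℝ) + 1)) +
        p₁ / ((J : ℝ) + 2) := by
  intro j hj₁ hjJ
  rw [hP₁ j (by omega) (by omega),
    mix_eq_of_eq_mul_add δ (sub_ne_zero.2 hp₀.2.ne') (hP₀ (j - 1) (by omega) (by omega))
      (hP₀ j (by omega) hjJ)]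
  ring

theorem list_experiment_prop1_middle_cases
    (J : ℕ) (hJ : 1 ≤ J)
    (P : ℤ → ℝ)
    (hPzero : ∀ j : ℤ, j < 0 ∨ (J : ℤ) < j → P j = 0)
    (hPnonneg : ∀ j : ℤ, 0 ≤ P j)
    (hPsum : ∑ j ∈ Finset.Icc (0 : ℤ) (J : ℤ), P j = 1)
    (δ p₀ p₁ : ℝ)
    (hδ : 0 ≤ δ ∧ δ ≤ 1) (hp₀ : 0 ≤ p₀ ∧ p₀ < 1) (hp₁ : 0 ≤ p₁ ∧ p₁ < 1)
    (P₀ P₁ : ℤ → ℝ)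
    (hP₀ : ∀ j : ℤ, 0 ≤ j → j ≤ (J : ℤ) →
      P₀ j = (1 - p₀) * P j + p₀ / ((J : ℝ) + 1))
    (hP₁ : ∀ j : ℤ, 0 ≤ j → j ≤ (J : ℤ) + 1 →
      P₁ j = (1 - p₁) * (δ * P (j - 1) + (1 - δ) * P j) + p₁ / ((J : ℝ) + 2)) :
    ∀ j : ℤ, 1 ≤ j → j ≤ (J : ℤ) →
      P₁ j = (1 - p₁) / (1 - p₀) *
          (δ * P₀ (j - 1) + (1 - δ) * P₀ j - p₀ / ((J : ℝ) + 1)) +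
        p₁ / ((J : ℝ) + 2) :=
  list_experiment_prop1_middle_cases_general J P δ p₀ p₁ hp₀ P₀ P₁ hP₀ hP₁
end

section
/- Under the list-experiment model with misreporting (Assumptions 1 and 2), consecutive differences of the observed treatment-group distribution are free of the uniform misreporting terms: for every j with 2 ≤ j ≤ J, P₁(j) − P₁(j−1) = ((1−p₁)/(1−p₀))·(δ·(P₀(j−1) − P₀(j−2)) + (1−δ)·(P₀(j) − P₀(j−1))). -/
/-!
The uniform misreporting terms `p₀ / (J + 1)` and `p₁ / (J + 2)` are constant in `j`, so they
cancel in consecutive differences: those of `P₀` are `(1 - p₀)` times those of `P`, and those of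
`P₁` are `(1 - p₁)` times those of the mixture `δ P(j - 1) + (1 - δ) P(j)`. Eliminating the
differences of `P` between the two gives the identity.
-/

theorem sub_eq_mul_sub_of_eq_mul_add {α R : Type*} [CommRing R] {f g : α → R} {a c : R}
    {x y : α} (hx : f x = a * g x + c) (hy : f y = a * g y + c) :
    f x - f y = a * (g x - g y) := by
  rw [hx, hy]
  ring

theorem list_experiment_consecutive_differences_general
    (J : ℕ)
    (P : ℤ → ℝ)
    (δ p₀ p₁ : ℝ)
    (hp₀ : 0 ≤ p₀ ∧ p₀ < 1)
    (P₀ P₁ : ℤ → ℝ)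
    (hP₀ : ∀ j : ℤ, 0 ≤ j → j ≤ (J : ℤ) →
      P₀ j = (1 - p₀) * P j + p₀ / ((J : ℝ) + 1))
    (hP₁ : ∀ j : ℤ, 0 ≤ j → j ≤ (J : ℤ) + 1 →
      P₁ j = (1 - p₁) * (δ * P (j - 1) + (1 - δ) * P j) + p₁ / ((J : ℝ) + 2)) :
    ∀ j : ℤ, 2 ≤ j → j ≤ (J : ℤ) →
      P₁ j - P₁ (j - 1) = (1 - p₁) / (1 - p₀) *
        (δ * (P₀ (j - 1) - P₀ (j - 2)) + (1 - δ) * (P₀ j - P₀ (j - 1))) := by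
  intro j hj hjJ
  have hΔ₀ : ∀ i : ℤ, 1 ≤ i → i ≤ J → P₀ i - P₀ (i - 1) = (1 - p₀) * (P i - P (i - 1)) :=
    fun i hi hiJ => sub_eq_mul_sub_of_eq_mul_add (hP₀ i (by omega) hiJ)
      (hP₀ (i - 1) (by omega) (by omega))
  have hΔ₁ := sub_eq_mul_sub_of_eq_mul_add (g := fun i => δ * P (i - 1) + (1 - δ) * P i)
    (hP₁ j (by omega) (by omega)) (hP₁ (j - 1) (by omega) (by omega))
  have hp₀' : 1 - p₀ ≠ 0 := by linarith [hp₀.2]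
  rw [hΔ₁, show j - 2 = j - 1 - 1 by ring, hΔ₀ j (by omega) hjJ, hΔ₀ (j - 1) (by omega) (by omega)]
  field_simp
  ring

theorem list_experiment_consecutive_differences
    (J : ℕ) (hJ : 1 ≤ J)
    (P : ℤ → ℝ)
    (hPzero : ∀ j : ℤ, j < 0 ∨ (J : ℤ) < j → P j = 0)
    (hPnonneg : ∀ j : ℤ, 0 ≤ P j)
    (hPsum : ∑ j ∈ Finset.Icc (0 : ℤ) (J : ℤ), P j = 1)
    (δ p₀ p₁ : ℝ)
    (hδ : 0 ≤ δ ∧ δ ≤ 1) (hp₀ : 0 ≤ p₀ ∧ p₀ < 1) (hp₁ : 0 ≤ p₁ ∧ p₁ < 1)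
    (P₀ P₁ : ℤ → ℝ)
    (hP₀ : ∀ j : ℤ, 0 ≤ j → j ≤ (J : ℤ) →
      P₀ j = (1 - p₀) * P j + p₀ / ((J : ℝ) + 1))
    (hP₁ : ∀ j : ℤ, 0 ≤ j → j ≤ (J : ℤ) + 1 →
      P₁ j = (1 - p₁) * (δ * P (j - 1) + (1 - δ) * P j) + p₁ / ((J : ℝ) + 2)) :
    ∀ j : ℤ, 2 ≤ j → j ≤ (J : ℤ) →
      P₁ j - P₁ (j - 1) = (1 - p₁) / (1 - p₀) *
        (δ * (P₀ (j - 1) - P₀ (j - 2)) + (1 - δ) * (P₀ j - P₀ (j - 1))) :=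
  list_experiment_consecutive_differences_general J P δ p₀ p₁ hp₀ P₀ P₁ hP₀ hP₁
end

section
/- Under the list-experiment model with misreporting (Assumptions 1 and 2), the mean of the observed treatment-group responses satisfies E(Y₁) = ((1−p₁)/(1−p₀))·(E(Y₀) + δ·(1−p₀) − J·p₀/2) + (J+1)·p₁/2, where E(Y₀) = ∑_{j=0}^{J} j·P₀(j) and E(Y₁) = ∑_{j=0}^{J+1} j·P₁(j). -/
/-!
Both observed distributions are mixtures `(1 - p) • Q + p • uniform` on `{0, …, n}`, so their
means are `(1 - p) E(Q) + n p / 2`. For the control group `Q = P`; for the treatment group `Q`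
is the mixture of `P` shifted by one (weight `δ`) and `P` itself, whose mean is `E(P) + δ`.
Eliminating `E(P)` between the two identities gives the formula.
-/

open Finset

namespace ListExperiment

lemma sum_Icc_add_one_right {M : Type*} [AddCommMonoid M] {a b : ℤ} (h : a ≤ b + 1) (f : ℤ → M) :
    ∑ j ∈ Icc a (b + 1), f j = ∑ j ∈ Icc a b, f j + f (b + 1) := by
  rw [← insert_Icc_right_eq_Icc_add_one h, sum_insert (by simp), add_comm]

lemma sum_Icc_zero_intCast (n : ℕ) : ∑ j ∈ Icc (0 : ℤ) n, (j : ℝ) = n * (n + 1) / 2 := by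
  induction n with
  | zero => simp
  | succ n ih =>
    rw [Nat.cast_succ, sum_Icc_add_one_right (by positivity), ih]
    push_cast
    ring

-- The index `j = 0` has weight `0`, so `P (-1)` never enters.
lemma sum_Icc_mul_sub_one (n : ℤ) (hn : -1 ≤ n) (P : ℤ → ℝ) :
    ∑ j ∈ Icc (0 : ℤ) (n + 1), (j : ℝ) * P (j - 1) =
      ∑ j ∈ Icc (0 : ℤ) n, (j : ℝ) * P j + ∑ j ∈ Icc (0 : ℤ) n, P j := by
  have hshift : Icc (0 : ℤ) (n + 1) = (Icc (-1) n).map (addRightEmbedding 1) := by simp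
  rw [hshift, sum_map, ← insert_Icc_add_one_left_eq_Icc hn, sum_insert (by simp), ← sum_add_distrib]
  simp only [addRightEmbedding_apply, add_sub_cancel_right, neg_add_cancel, Int.cast_zero,
    zero_mul, zero_add, Int.cast_add, Int.cast_one]
  exact sum_congr rfl fun j _ => by ring

lemma sum_mul_eq_of_mix_uniform (n : ℕ) (p : ℝ) {Q R : ℤ → ℝ}
    (hR : ∀ j ∈ Icc (0 : ℤ) n, R j = (1 - p) * Q j + p / (n + 1)) :
    ∑ j ∈ Icc (0 : ℤ) n, (j : ℝ) * R j =
      (1 - p) * ∑ j ∈ Icc (0 : ℤ) n, (j : ℝ) * Q j + n * p / 2 := by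
  have hn : (n : ℝ) + 1 ≠ 0 := by positivity
  calc ∑ j ∈ Icc (0 : ℤ) n, (j : ℝ) * R j
      = ∑ j ∈ Icc (0 : ℤ) n, ((1 - p) * ((j : ℝ) * Q j) + p / (n + 1) * j) :=
        sum_congr rfl fun j hj => by rw [hR j hj]; ring
    _ = _ := by
      rw [sum_add_distrib, ← mul_sum, ← mul_sum, sum_Icc_zero_intCast]
      field_simp

lemma sum_mul_shift_mix (n : ℕ) (δ : ℝ) {P : ℤ → ℝ} (hP : P (n + 1) = 0) :
    ∑ j ∈ Icc (0 : ℤ) (n + 1), (j : ℝ) * (δ * P (j - 1) + (1 - δ) * P j) =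
      ∑ j ∈ Icc (0 : ℤ) n, (j : ℝ) * P j + δ * ∑ j ∈ Icc (0 : ℤ) n, P j := by
  have hn : (-1 : ℤ) ≤ n := by omega
  calc ∑ j ∈ Icc (0 : ℤ) (n + 1), (j : ℝ) * (δ * P (j - 1) + (1 - δ) * P j)
      = δ * ∑ j ∈ Icc (0 : ℤ) (n + 1), (j : ℝ) * P (j - 1)
          + (1 - δ) * ∑ j ∈ Icc (0 : ℤ) (n + 1), (j : ℝ) * P j := by
        rw [mul_sum, mul_sum, ← sum_add_distrib]
        exact sum_congr rfl fun j _ => by ring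
    _ = _ := by
      rw [sum_Icc_mul_sub_one n hn, sum_Icc_add_one_right (by omega), hP]
      ring

end ListExperiment

open ListExperiment in
theorem list_experiment_treatment_mean_general
    (J : ℕ)
    (P : ℤ → ℝ)
    (hPzero : ∀ j : ℤ, j < 0 ∨ (J : ℤ) < j → P j = 0)
    (hPsum : ∑ j ∈ Finset.Icc (0 : ℤ) (J : ℤ), P j = 1)
    (δ p₀ p₁ : ℝ)
    (hp₀ : 0 ≤ p₀ ∧ p₀ < 1)
    (P₀ P₁ : ℤ → ℝ)
    (hP₀ : ∀ j : ℤ, 0 ≤ j → j ≤ (J : ℤ) →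
      P₀ j = (1 - p₀) * P j + p₀ / ((J : ℝ) + 1))
    (hP₁ : ∀ j : ℤ, 0 ≤ j → j ≤ (J : ℤ) + 1 →
      P₁ j = (1 - p₁) * (δ * P (j - 1) + (1 - δ) * P j) + p₁ / ((J : ℝ) + 2)) :
    ∑ j ∈ Finset.Icc (0 : ℤ) ((J : ℤ) + 1), (j : ℝ) * P₁ j =
      (1 - p₁) / (1 - p₀) *
          ((∑ j ∈ Finset.Icc (0 : ℤ) (J : ℤ), (j : ℝ) * P₀ j) +
            δ * (1 - p₀) - (J : ℝ) * p₀ / 2) +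
        ((J : ℝ) + 1) * p₁ / 2 := by
  have hP_top : P ((J : ℤ) + 1) = 0 := hPzero _ (Or.inr (lt_add_one _))
  have hY₀ := sum_mul_eq_of_mix_uniform J p₀ (Q := P) (R := P₀)
    fun j hj => hP₀ j (mem_Icc.1 hj).1 (mem_Icc.1 hj).2
  have hY₁ := sum_mul_eq_of_mix_uniform (J + 1) p₁
    (Q := fun j => δ * P (j - 1) + (1 - δ) * P j) (R := P₁) fun j hj => by
      push_cast at hj ⊢
      rw [hP₁ j (mem_Icc.1 hj).1 (mem_Icc.1 hj).2, add_assoc, one_add_one_eq_two]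
  push_cast at hY₁
  rw [hY₁, hY₀, sum_mul_shift_mix J δ hP_top, hPsum]
  have : 1 - p₀ ≠ 0 := by linarith [hp₀.2]
  field_simp
  ring

theorem list_experiment_treatment_mean
    (J : ℕ) (hJ : 1 ≤ J)
    (P : ℤ → ℝ)
    (hPzero : ∀ j : ℤ, j < 0 ∨ (J : ℤ) < j → P j = 0)
    (hPnonneg : ∀ j : ℤ, 0 ≤ P j)
    (hPsum : ∑ j ∈ Finset.Icc (0 : ℤ) (J : ℤ), P j = 1)
    (δ p₀ p₁ : ℝ)
    (hδ : 0 ≤ δ ∧ δ ≤ 1) (hp₀ : 0 ≤ p₀ ∧ p₀ < 1) (hp₁ : 0 ≤ p₁ ∧ p₁ < 1)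
    (P₀ P₁ : ℤ → ℝ)
    (hP₀ : ∀ j : ℤ, 0 ≤ j → j ≤ (J : ℤ) →
      P₀ j = (1 - p₀) * P j + p₀ / ((J : ℝ) + 1))
    (hP₁ : ∀ j : ℤ, 0 ≤ j → j ≤ (J : ℤ) + 1 →
      P₁ j = (1 - p₁) * (δ * P (j - 1) + (1 - δ) * P j) + p₁ / ((J : ℝ) + 2)) :
    ∑ j ∈ Finset.Icc (0 : ℤ) ((J : ℤ) + 1), (j : ℝ) * P₁ j =
      (1 - p₁) / (1 - p₀) *
          ((∑ j ∈ Finset.Icc (0 : ℤ) (J : ℤ), (j : ℝ) * P₀ j) +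
            δ * (1 - p₀) - (J : ℝ) * p₀ / 2) +
        ((J : ℝ) + 1) * p₁ / 2 :=
  list_experiment_treatment_mean_general J P hPzero hPsum δ p₀ p₁ hp₀ P₀ P₁ hP₀ hP₁
end

section
/- Under the list-experiment model with misreporting (Assumptions 1 and 2), the mean difference of observed responses across the two groups satisfies E(Y₁) − E(Y₀) = δ·(1−p₁) + ((p₀−p₁)/(1−p₀))·E(Y₀) − J·(1−p₁)·p₀/(2·(1−p₀)) + (J+1)·p₁/2, where E(Y₀) = ∑_{j=0}^{J} j·P₀(j) and E(Y₁) = ∑_{j=0}^{J+1} j·P₁(j). (Corollary 1, general case.) -/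
/-!
Each observed distribution is a mixture, with weight `1 - p`, of a latent distribution and a
discrete uniform one, so its mean is `(1 - p)` times the latent mean plus `p` times the uniform
mean. The latent treatment distribution shifts the sensitive fraction `δ` of the mass of `P` up
by one, which raises the mean of `P` by exactly `δ`. Eliminating the latent mean of `P` between
the two resulting identities gives the formula.
-/

open Finset

lemma sum_Icc_int_add_one_right {M : Type*} [AddCommMonoid M] {a b : ℤ} (h : a ≤ b + 1)
    (f : ℤ → M) : ∑ j ∈ Icc a (b + 1), f j = ∑ j ∈ Icc a b, f j + f (b + 1) := by
  rw [← insert_Icc_right_eq_Icc_add_one h, sum_insert (by simp), add_comm]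

lemma sum_Icc_zero_intCast (n : ℕ) : ∑ j ∈ Icc (0 : ℤ) n, (j : ℝ) = n * (n + 1) / 2 := by
  induction n with
  | zero => simp
  | succ k ih =>
    rw [Nat.cast_succ, sum_Icc_int_add_one_right (by positivity), ih]
    push_cast
    ring

lemma sum_mul_eq_of_eq_uniform_mixture {n : ℕ} {p : ℝ} {f g : ℤ → ℝ}
    (hg : ∀ j : ℤ, 0 ≤ j → j ≤ n → g j = (1 - p) * f j + p / (n + 1)) :
    ∑ j ∈ Icc (0 : ℤ) n, (j : ℝ) * g j =
      (1 - p) * ∑ j ∈ Icc (0 : ℤ) n, (j : ℝ) * f j + p * n / 2 := by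
  calc ∑ j ∈ Icc (0 : ℤ) n, (j : ℝ) * g j
      = ∑ j ∈ Icc (0 : ℤ) n, ((1 - p) * ((j : ℝ) * f j) + p / (n + 1) * j) := by
        refine sum_congr rfl fun j hj => ?_
        rw [mem_Icc] at hj
        rw [hg j hj.1 hj.2]
        ring
    _ = (1 - p) * ∑ j ∈ Icc (0 : ℤ) n, (j : ℝ) * f j + p / (n + 1) * (n * (n + 1) / 2) := by
        rw [sum_add_distrib, ← mul_sum, ← mul_sum, sum_Icc_zero_intCast]
    _ = (1 - p) * ∑ j ∈ Icc (0 : ℤ) n, (j : ℝ) * f j + p * n / 2 := by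
        field_simp

lemma sum_Icc_mul_shift_one (n : ℤ) (f : ℤ → ℝ) :
    ∑ j ∈ Icc (0 : ℤ) (n + 1), (j : ℝ) * f (j - 1) =
      ∑ j ∈ Icc (0 : ℤ) n, (j : ℝ) * f j + ∑ j ∈ Icc (0 : ℤ) n, f j := by
  have hshift : Icc (0 : ℤ) (n + 1) = (Icc (-1) n).map (addRightEmbedding 1) := by
    rw [map_add_right_Icc]
    norm_num
  rw [hshift, sum_map, ← sum_add_distrib]
  simp only [addRightEmbedding_apply, add_sub_cancel_right]
  -- the extra index `-1` carries the weight `-1 + 1 = 0`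
  have hsub : Icc (0 : ℤ) n ⊆ Icc (-1) n := Icc_subset_Icc (by norm_num) le_rfl
  rw [← sum_subset hsub fun j hj hj₀ => ?_]
  · exact sum_congr rfl fun j _ => by push_cast; ring
  · obtain rfl : j = -1 := by simp only [mem_Icc] at hj hj₀; omega
    norm_num

lemma sum_Icc_mul_shift_mixture {n : ℤ} {P : ℤ → ℝ} (htop : P (n + 1) = 0) (δ : ℝ) :
    ∑ j ∈ Icc (0 : ℤ) (n + 1), (j : ℝ) * (δ * P (j - 1) + (1 - δ) * P j) =
      ∑ j ∈ Icc (0 : ℤ) n, (j : ℝ) * P j + δ * ∑ j ∈ Icc (0 : ℤ) n, P j := by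
  have hextend :
      ∑ j ∈ Icc (0 : ℤ) (n + 1), (j : ℝ) * P j = ∑ j ∈ Icc (0 : ℤ) n, (j : ℝ) * P j := by
    refine (sum_subset (Icc_subset_Icc le_rfl (by omega)) fun j hj hjn => ?_).symm
    obtain rfl : j = n + 1 := by simp only [mem_Icc] at hj hjn; omega
    rw [htop, mul_zero]
  simp only [mul_add, sum_add_distrib, mul_left_comm _ δ, mul_left_comm _ (1 - δ), ← mul_sum,
    sum_Icc_mul_shift_one, hextend]
  ring

theorem list_experiment_mean_difference_general_general
    (J : ℕ)
    (P : ℤ → ℝ)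
    (hPzero : ∀ j : ℤ, j < 0 ∨ (J : ℤ) < j → P j = 0)
    (hPsum : ∑ j ∈ Finset.Icc (0 : ℤ) (J : ℤ), P j = 1)
    (δ p₀ p₁ : ℝ)
    (hp₀ : 0 ≤ p₀ ∧ p₀ < 1)
    (P₀ P₁ : ℤ → ℝ)
    (hP₀ : ∀ j : ℤ, 0 ≤ j → j ≤ (J : ℤ) →
      P₀ j = (1 - p₀) * P j + p₀ / ((J : ℝ) + 1))
    (hP₁ : ∀ j : ℤ, 0 ≤ j → j ≤ (J : ℤ) + 1 →
      P₁ j = (1 - p₁) * (δ * P (j - 1) + (1 - δ) * P j) + p₁ / ((J : ℝ) + 2)) :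
    (∑ j ∈ Finset.Icc (0 : ℤ) ((J : ℤ) + 1), (j : ℝ) * P₁ j) -
        (∑ j ∈ Finset.Icc (0 : ℤ) (J : ℤ), (j : ℝ) * P₀ j) =
      δ * (1 - p₁) +
        (p₀ - p₁) / (1 - p₀) * (∑ j ∈ Finset.Icc (0 : ℤ) (J : ℤ), (j : ℝ) * P₀ j) -
        (J : ℝ) * (1 - p₁) * p₀ / (2 * (1 - p₀)) + ((J : ℝ) + 1) * p₁ / 2 := by
  set M := ∑ j ∈ Icc (0 : ℤ) J, (j : ℝ) * P j
  have hE₀ : ∑ j ∈ Icc (0 : ℤ) J, (j : ℝ) * P₀ j = (1 - p₀) * M + p₀ * J / 2 :=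
    sum_mul_eq_of_eq_uniform_mixture hP₀
  have hE₁ : ∑ j ∈ Icc (0 : ℤ) (J + 1), (j : ℝ) * P₁ j =
      (1 - p₁) * (M + δ) + p₁ * (J + 1) / 2 := by
    have hmix := sum_mul_eq_of_eq_uniform_mixture (n := J + 1) (p := p₁) (g := P₁)
      (f := fun j => δ * P (j - 1) + (1 - δ) * P j) fun j hj₀ hj => by
        push_cast at hj ⊢
        rw [hP₁ j hj₀ hj]
        ring
    push_cast at hmix
    rw [hmix, sum_Icc_mul_shift_mixture (hPzero _ (.inr (by omega))), hPsum, mul_one]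
  have hp₀' : 1 - p₀ ≠ 0 := by linarith [hp₀.2]
  rw [hE₁, hE₀]
  field_simp
  ring

theorem list_experiment_mean_difference_general
    (J : ℕ) (hJ : 1 ≤ J)
    (P : ℤ → ℝ)
    (hPzero : ∀ j : ℤ, j < 0 ∨ (J : ℤ) < j → P j = 0)
    (hPnonneg : ∀ j : ℤ, 0 ≤ P j)
    (hPsum : ∑ j ∈ Finset.Icc (0 : ℤ) (J : ℤ), P j = 1)
    (δ p₀ p₁ : ℝ)
    (hδ : 0 ≤ δ ∧ δ ≤ 1) (hp₀ : 0 ≤ p₀ ∧ p₀ < 1) (hp₁ : 0 ≤ p₁ ∧ p₁ < 1)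
    (P₀ P₁ : ℤ → ℝ)
    (hP₀ : ∀ j : ℤ, 0 ≤ j → j ≤ (J : ℤ) →
      P₀ j = (1 - p₀) * P j + p₀ / ((J : ℝ) + 1))
    (hP₁ : ∀ j : ℤ, 0 ≤ j → j ≤ (J : ℤ) + 1 →
      P₁ j = (1 - p₁) * (δ * P (j - 1) + (1 - δ) * P j) + p₁ / ((J : ℝ) + 2)) :
    (∑ j ∈ Finset.Icc (0 : ℤ) ((J : ℤ) + 1), (j : ℝ) * P₁ j) -
        (∑ j ∈ Finset.Icc (0 : ℤ) (J : ℤ), (j : ℝ) * P₀ j) =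
      δ * (1 - p₁) +
        (p₀ - p₁) / (1 - p₀) * (∑ j ∈ Finset.Icc (0 : ℤ) (J : ℤ), (j : ℝ) * P₀ j) -
        (J : ℝ) * (1 - p₁) * p₀ / (2 * (1 - p₀)) + ((J : ℝ) + 1) * p₁ / 2 :=
  list_experiment_mean_difference_general_general J P hPzero hPsum δ p₀ p₁ hp₀ P₀ P₁ hP₀ hP₁
end

section
/- For J = 3, if (δ, p₀, p₁) ∈ [0,1] × [0,1) × [0,1) satisfies the list-experiment moment system and the denominator (1−δ)·P₀(2) + (2δ−1)·P₀(1) − δ·P₀(0) is nonzero, then P₁(2) − P₁(1) ≠ 0 and (P₁(3) − P₁(2)) / (P₁(2) − P₁(1)) = ((1−δ)·P₀(3) + (2δ−1)·P₀(2) − δ·P₀(1)) / ((1−δ)·P₀(2) + (2δ−1)·P₀(1) − δ·P₀(0)). -/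
/-- For J = 3, the δ-identifying ratio of the list-experiment moment system. -/
theorem list_experiment_J3_delta_ratio
    (P₀ P₁ : ℕ → ℝ) (δ p₀ p₁ : ℝ)
    (hδ : 0 ≤ δ ∧ δ ≤ 1) (hp₀ : 0 ≤ p₀ ∧ p₀ < 1) (hp₁ : 0 ≤ p₁ ∧ p₁ < 1)
    (h0 : P₁ 0 = (1 - p₁) / (1 - p₀) * ((1 - δ) * P₀ 0 - (1 - δ) * p₀ / 4) + p₁ / 5)
    (hmid : ∀ j : ℕ, 1 ≤ j → j ≤ 3 →
      P₁ j = (1 - p₁) / (1 - p₀) * (δ * P₀ (j - 1) + (1 - δ) * P₀ j - p₀ / 4) + p₁ / 5)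
    (h4 : P₁ 4 = (1 - p₁) / (1 - p₀) * (δ * P₀ 3 - δ * p₀ / 4) + p₁ / 5)
    (hden : (1 - δ) * P₀ 2 + (2 * δ - 1) * P₀ 1 - δ * P₀ 0 ≠ 0) :
    P₁ 2 - P₁ 1 ≠ 0 ∧
      (P₁ 3 - P₁ 2) / (P₁ 2 - P₁ 1) =
        ((1 - δ) * P₀ 3 + (2 * δ - 1) * P₀ 2 - δ * P₀ 1) /
          ((1 - δ) * P₀ 2 + (2 * δ - 1) * P₀ 1 - δ * P₀ 0) := by
  have h1 := hmid 1 (by norm_num) (by norm_num)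
  have h2 := hmid 2 (by norm_num) (by norm_num)
  have h3 := hmid 3 (by norm_num) (by norm_num)
  norm_num at h1 h2 h3
  set c := (1 - p₁) / (1 - p₀) with hc
  have hcne : c ≠ 0 := by
    apply div_ne_zero <;> [linarith [hp₁.2]; linarith [hp₀.2]]
  have e21 : P₁ 2 - P₁ 1 = c * ((1 - δ) * P₀ 2 + (2 * δ - 1) * P₀ 1 - δ * P₀ 0) := by
    rw [h1, h2]; ring
  have e32 : P₁ 3 - P₁ 2 = c * ((1 - δ) * P₀ 3 + (2 * δ - 1) * P₀ 2 - δ * P₀ 1) := by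
    rw [h2, h3]; ring
  refine ⟨by rw [e21]; exact mul_ne_zero hcne hden, ?_⟩
  rw [e21, e32, mul_div_mul_left _ _ hcne]
end

section
/- For J = 3, if (δ, p₀, p₁) ∈ [0,1] × [0,1) × [0,1) satisfies the list-experiment moment system and the denominator (1−δ)·P₀(2) + (2δ−1)·P₀(1) − δ·P₀(0) is nonzero, then P₁(2) − P₁(1) ≠ 0 and (P₁(4) − P₁(0)) / (P₁(2) − P₁(1)) = (δ·P₀(3) − (1−δ)·P₀(0) + (1−2δ)·p₀/4) / ((1−δ)·P₀(2) + (2δ−1)·P₀(1) − δ·P₀(0)). -/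
/-- For J = 3, the p₀-identifying ratio of the list-experiment moment system. -/
theorem list_experiment_J3_p0_ratio
    (P₀ P₁ : ℕ → ℝ) (δ p₀ p₁ : ℝ)
    (hδ : 0 ≤ δ ∧ δ ≤ 1) (hp₀ : 0 ≤ p₀ ∧ p₀ < 1) (hp₁ : 0 ≤ p₁ ∧ p₁ < 1)
    (h0 : P₁ 0 = (1 - p₁) / (1 - p₀) * ((1 - δ) * P₀ 0 - (1 - δ) * p₀ / 4) + p₁ / 5)
    (hmid : ∀ j : ℕ, 1 ≤ j → j ≤ 3 →
      P₁ j = (1 - p₁) / (1 - p₀) * (δ * P₀ (j - 1) + (1 - δ) * P₀ j - p₀ / 4) + p₁ / 5)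
    (h4 : P₁ 4 = (1 - p₁) / (1 - p₀) * (δ * P₀ 3 - δ * p₀ / 4) + p₁ / 5)
    (hden : (1 - δ) * P₀ 2 + (2 * δ - 1) * P₀ 1 - δ * P₀ 0 ≠ 0) :
    P₁ 2 - P₁ 1 ≠ 0 ∧
      (P₁ 4 - P₁ 0) / (P₁ 2 - P₁ 1) =
        (δ * P₀ 3 - (1 - δ) * P₀ 0 + (1 - 2 * δ) * p₀ / 4) /
          ((1 - δ) * P₀ 2 + (2 * δ - 1) * P₀ 1 - δ * P₀ 0) := by
  have h1 := hmid 1 (by norm_num) (by norm_num)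
  have h2 := hmid 2 (by norm_num) (by norm_num)
  norm_num at h1 h2
  set c := (1 - p₁) / (1 - p₀) with hc
  have hcpos : 0 < c := div_pos (by linarith [hp₁.2]) (by linarith [hp₀.2])
  have hd : P₁ 2 - P₁ 1 = c * ((1 - δ) * P₀ 2 + (2 * δ - 1) * P₀ 1 - δ * P₀ 0) := by
    rw [h1, h2]; ring
  have hn : P₁ 4 - P₁ 0 = c * (δ * P₀ 3 - (1 - δ) * P₀ 0 + (1 - 2 * δ) * p₀ / 4) := by
    rw [h0, h4]; ring
  constructor
  · rw [hd]; exact mul_ne_zero hcpos.ne' hden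
  · rw [hd, hn, mul_div_mul_left _ _ hcpos.ne']
end

section
/- For J = 3, the list-experiment moment system has at most one solution under the following nondegeneracy conditions: suppose (δ, p₀, p₁) and (δ', p₀', p₁'), both in [0,1] × [0,1) × [0,1), satisfy the list-experiment moment system for the same observed P₀ and P₁; suppose further that (1−δ)·P₀(2) + (2δ−1)·P₀(1) − δ·P₀(0) ≠ 0 and (1−δ')·P₀(2) + (2δ'−1)·P₀(1) − δ'·P₀(0) ≠ 0; that (P₁(3)−P₁(2))·(2·P₀(1) − P₀(2) − P₀(0)) ≠ (P₁(2)−P₁(1))·(2·P₀(2) − P₀(3) − P₀(1)); that δ ≠ 1/2; and that (1−δ)·(P₀(0) − p₀/4)/(1−p₀) ≠ 1/5. Then (δ, p₀, p₁) = (δ', p₀', p₁'). -/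
/-- For J = 3, the list-experiment moment system has at most one solution under
the stated nondegeneracy conditions. -/
theorem list_experiment_J3_uniqueness
    (P₀ P₁ : ℕ → ℝ) (δ p₀ p₁ δ' p₀' p₁' : ℝ)
    (hδ : 0 ≤ δ ∧ δ ≤ 1) (hp₀ : 0 ≤ p₀ ∧ p₀ < 1) (hp₁ : 0 ≤ p₁ ∧ p₁ < 1)
    (hδ' : 0 ≤ δ' ∧ δ' ≤ 1) (hp₀' : 0 ≤ p₀' ∧ p₀' < 1) (hp₁' : 0 ≤ p₁' ∧ p₁' < 1)
    (h0 : P₁ 0 = (1 - p₁) / (1 - p₀) * ((1 - δ) * P₀ 0 - (1 - δ) * p₀ / 4) + p₁ / 5)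
    (hmid : ∀ j : ℕ, 1 ≤ j → j ≤ 3 →
      P₁ j = (1 - p₁) / (1 - p₀) * (δ * P₀ (j - 1) + (1 - δ) * P₀ j - p₀ / 4) + p₁ / 5)
    (h4 : P₁ 4 = (1 - p₁) / (1 - p₀) * (δ * P₀ 3 - δ * p₀ / 4) + p₁ / 5)
    (h0' : P₁ 0 = (1 - p₁') / (1 - p₀') * ((1 - δ') * P₀ 0 - (1 - δ') * p₀' / 4) + p₁' / 5)
    (hmid' : ∀ j : ℕ, 1 ≤ j → j ≤ 3 →
      P₁ j = (1 - p₁') / (1 - p₀') * (δ' * P₀ (j - 1) + (1 - δ') * P₀ j - p₀' / 4) + p₁' / 5)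
    (h4' : P₁ 4 = (1 - p₁') / (1 - p₀') * (δ' * P₀ 3 - δ' * p₀' / 4) + p₁' / 5)
    (hden : (1 - δ) * P₀ 2 + (2 * δ - 1) * P₀ 1 - δ * P₀ 0 ≠ 0)
    (hden' : (1 - δ') * P₀ 2 + (2 * δ' - 1) * P₀ 1 - δ' * P₀ 0 ≠ 0)
    (hcross : (P₁ 3 - P₁ 2) * (2 * P₀ 1 - P₀ 2 - P₀ 0) ≠
      (P₁ 2 - P₁ 1) * (2 * P₀ 2 - P₀ 3 - P₀ 1))
    (hhalf : δ ≠ 1 / 2)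
    (hlast : (1 - δ) * (P₀ 0 - p₀ / 4) / (1 - p₀) ≠ 1 / 5) :
    δ = δ' ∧ p₀ = p₀' ∧ p₁ = p₁' := by
  obtain ⟨hδ0, hδ1⟩ := hδ
  have hp0ne : (1 : ℝ) - p₀ ≠ 0 := by linarith [hp₀.2]
  have hp0ne' : (1 : ℝ) - p₀' ≠ 0 := by linarith [hp₀'.2]
  set r := (1 - p₁) / (1 - p₀) with hrdef
  set r' := (1 - p₁') / (1 - p₀') with hrdef'
  have hrpos : 0 < r := div_pos (by linarith [hp₁.2]) (by linarith [hp₀.2])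
  have hrpos' : 0 < r' := div_pos (by linarith [hp₁'.2]) (by linarith [hp₀'.2])
  have hrne : r ≠ 0 := ne_of_gt hrpos
  have hrne' : r' ≠ 0 := ne_of_gt hrpos'
  have h1 := hmid 1 (by norm_num) (by norm_num)
  have h2 := hmid 2 (by norm_num) (by norm_num)
  have h3 := hmid 3 (by norm_num) (by norm_num)
  have h1' := hmid' 1 (by norm_num) (by norm_num)
  have h2' := hmid' 2 (by norm_num) (by norm_num)
  have h3' := hmid' 3 (by norm_num) (by norm_num)
  norm_num at h1 h2 h3 h1' h2' h3'
  set a0 := P₀ 2 - P₀ 1 with ha0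
  set A := 2 * P₀ 1 - P₀ 2 - P₀ 0 with hA
  set b0 := P₀ 3 - P₀ 2 with hb0
  set B := 2 * P₀ 2 - P₀ 3 - P₀ 1 with hB
  have hD1 : P₁ 2 - P₁ 1 = r * (a0 + δ * A) := by rw [h2, h1]; ring
  have hD2 : P₁ 3 - P₁ 2 = r * (b0 + δ * B) := by rw [h3, h2]; ring
  have hD1' : P₁ 2 - P₁ 1 = r' * (a0 + δ' * A) := by rw [h2', h1']; ring
  have hD2' : P₁ 3 - P₁ 2 = r' * (b0 + δ' * B) := by rw [h3', h2']; ring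
  have hBA : b0 * A - a0 * B ≠ 0 := by
    intro h
    apply hcross
    rw [hD2, hD1]
    linear_combination r * h
  have hδeq : δ = δ' := by
    have hmul : r * (a0 + δ * A) * (r' * (b0 + δ' * B))
        = r' * (a0 + δ' * A) * (r * (b0 + δ * B)) := by
      rw [← hD1, ← hD2, ← hD1', ← hD2']
    have : r * r' * ((δ' - δ) * (a0 * B - b0 * A)) = 0 := by linear_combination hmul
    have h2 : (δ' - δ) * (a0 * B - b0 * A) = 0 := by
      rcases mul_eq_zero.mp this with h | h
      · exact absurd h (mul_ne_zero hrne hrne')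
      · exact h
    rcases mul_eq_zero.mp h2 with h | h
    · linarith
    · exfalso; apply hBA; linarith
  have hdenA : a0 + δ * A ≠ 0 := by
    intro h; apply hden; rw [hA, ha0] at h; linarith
  have hreq : r = r' := by
    have := hD1.symm.trans hD1'
    rw [← hδeq] at this
    exact mul_right_cancel₀ hdenA this
  have hr : 1 - p₁ = r * (1 - p₀) := by
    rw [hrdef]; field_simp
  have hr' : 1 - p₁' = r * (1 - p₀') := by
    rw [hreq, hrdef']; field_simp
  have hc : -(r * p₀) / 4 + p₁ / 5 = -(r * p₀') / 4 + p₁' / 5 := by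
    have := h2.symm.trans h2'
    rw [← hreq, ← hδeq] at this
    linarith
  have hp0eq : p₀ = p₀' := by
    have h5 : r * (p₀ - p₀') = 0 := by linarith
    have := mul_eq_zero.mp h5
    rcases this with h | h
    · exact absurd h hrne
    · linarith
  have hp1eq : p₁ = p₁' := by
    rw [hp0eq] at hr; linarith
  exact ⟨hδeq, hp0eq, hp1eq⟩
end

section
/- Uniqueness of the normalized eigendecomposition used in the multiple response technique: let K, A, A' be real 2×2 matrices and D = diag(d₀, d₁), D' = diag(d₀', d₁') real diagonal 2×2 matrices such that A and A' are invertible, each column of A and of A' sums to 1, d₀ ≠ d₁, the second-row entries satisfy A[1][0] < A[1][1] and A'[1][0] < A'[1][1], and K = A·D·A⁻¹ = A'·D'·A'⁻¹. Then A = A' and D = D'. -/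
/-- Uniqueness of the normalized eigendecomposition used in the multiple response
technique: if `K = A·D·A⁻¹ = A'·D'·A'⁻¹` with `A, A'` invertible, each column of
`A` and `A'` summing to 1, distinct eigenvalues `d₀ ≠ d₁`, and the ordering
`A 1 0 < A 1 1` and `A' 1 0 < A' 1 1`, then `A = A'` and `D = D'`. -/
theorem eigendecomposition_uniqueness
    (K A A' : Matrix (Fin 2) (Fin 2) ℝ) (d₀ d₁ d₀' d₁' : ℝ)
    (hA : IsUnit A.det) (hA' : IsUnit A'.det)
    (hcol : ∀ j : Fin 2, ∑ i : Fin 2, A i j = 1)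
    (hcol' : ∀ j : Fin 2, ∑ i : Fin 2, A' i j = 1)
    (hd : d₀ ≠ d₁)
    (hord : A 1 0 < A 1 1) (hord' : A' 1 0 < A' 1 1)
    (hK : K = A * Matrix.diagonal ![d₀, d₁] * A⁻¹)
    (hK' : K = A' * Matrix.diagonal ![d₀', d₁'] * A'⁻¹) :
    A = A' ∧ d₀ = d₀' ∧ d₁ = d₁' := by
  set B : Matrix (Fin 2) (Fin 2) ℝ := A'⁻¹ * A with hBdef
  have hBmul : A' * B = A := by
    rw [hBdef, ← Matrix.mul_assoc, Matrix.mul_nonsing_inv A' hA', Matrix.one_mul]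
  have hKeq : A * Matrix.diagonal ![d₀, d₁] * A⁻¹ = A' * Matrix.diagonal ![d₀', d₁'] * A'⁻¹ :=
    hK.symm.trans hK'
  have hcomm : B * Matrix.diagonal ![d₀, d₁] = Matrix.diagonal ![d₀', d₁'] * B := by
    have h2 : A'⁻¹ * (A * Matrix.diagonal ![d₀, d₁] * A⁻¹) * A
        = A'⁻¹ * (A' * Matrix.diagonal ![d₀', d₁'] * A'⁻¹) * A := by rw [hKeq]
    simp only [← Matrix.mul_assoc] at h2
    rw [Matrix.nonsing_inv_mul A' hA', Matrix.one_mul,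
      Matrix.mul_assoc (A'⁻¹ * A * Matrix.diagonal ![d₀, d₁]) A⁻¹ A,
      Matrix.nonsing_inv_mul A hA, Matrix.mul_one] at h2
    rw [hBdef, ← Matrix.mul_assoc]
    exact h2
  have he : ∀ i j : Fin 2, B i j * ![d₀, d₁] j = ![d₀', d₁'] i * B i j := by
    intro i j
    have := congrFun (congrFun hcomm i) j
    simpa [Matrix.mul_diagonal, Matrix.diagonal_mul] using this
  have e00 := he 0 0
  have e01 := he 0 1
  have e10 := he 1 0
  have e11 := he 1 1
  simp only [Matrix.cons_val_zero, Matrix.cons_val_one, Matrix.head_cons] at e00 e01 e10 e11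
  have hdetB : B 0 0 * B 1 1 - B 0 1 * B 1 0 ≠ 0 := by
    have hu : IsUnit B.det := by
      rw [hBdef, Matrix.det_mul]
      exact (Matrix.isUnit_nonsing_inv_det A' hA').mul hA
    rw [Matrix.det_fin_two] at hu
    exact hu.ne_zero
  have hAentry : ∀ i j : Fin 2, A i j = A' i 0 * B 0 j + A' i 1 * B 1 j := by
    intro i j
    have := congrFun (congrFun hBmul i) j
    rw [Matrix.mul_apply, Fin.sum_univ_two] at this
    exact this.symm
  have hcolB : ∀ j : Fin 2, B 0 j + B 1 j = 1 := by
    intro j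
    have h1 := hcol j
    have h2 := hcol' (0 : Fin 2)
    have h3 := hcol' (1 : Fin 2)
    rw [Fin.sum_univ_two] at h1 h2 h3
    rw [hAentry 0 j, hAentry 1 j] at h1
    linear_combination h1 - B 0 j * h2 - B 1 j * h3
  have hcB0 := hcolB 0
  have hcB1 := hcolB 1
  by_cases h00 : B 0 0 = 0
  · -- antidiagonal case: contradiction with the ordering
    exfalso
    have h01 : B 0 1 ≠ 0 := by
      intro h; apply hdetB; rw [h00, h]; ring
    have h10 : B 1 0 ≠ 0 := by
      intro h; apply hdetB; rw [h00, h]; ring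
    have hd0' : d₀' = d₁ := by
      have h : B 0 1 * (d₁ - d₀') = 0 := by linear_combination e01
      rcases mul_eq_zero.mp h with h | h
      · exact absurd h h01
      · linarith
    have hd1' : d₁' = d₀ := by
      have h : B 1 0 * (d₀ - d₁') = 0 := by linear_combination e10
      rcases mul_eq_zero.mp h with h | h
      · exact absurd h h10
      · linarith
    have h11 : B 1 1 = 0 := by
      have h : B 1 1 * (d₁ - d₁') = 0 := by linear_combination e11
      rcases mul_eq_zero.mp h with h | h
      · exact h
      · exact absurd (by linarith : d₀ = d₁) hd
    have hB10 : B 1 0 = 1 := by linarith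
    have hB01 : B 0 1 = 1 := by linarith
    have hA10 : A 1 0 = A' 1 1 := by rw [hAentry 1 0, h00, hB10]; ring
    have hA11 : A 1 1 = A' 1 0 := by rw [hAentry 1 1, hB01, h11]; ring
    rw [hA10, hA11] at hord
    linarith
  · -- diagonal case: B = 1
    have hd0' : d₀ = d₀' := by
      have h : B 0 0 * (d₀ - d₀') = 0 := by linear_combination e00
      rcases mul_eq_zero.mp h with h | h
      · exact absurd h h00
      · linarith
    have h01 : B 0 1 = 0 := by
      have h : B 0 1 * (d₁ - d₀') = 0 := by linear_combination e01
      rcases mul_eq_zero.mp h with h | h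
      · exact h
      · exact absurd (by linarith : d₀ = d₁) hd
    have h11 : B 1 1 ≠ 0 := by
      intro h; apply hdetB; rw [h01, h]; ring
    have hd1' : d₁ = d₁' := by
      have h : B 1 1 * (d₁ - d₁') = 0 := by linear_combination e11
      rcases mul_eq_zero.mp h with h | h
      · exact absurd h h11
      · linarith
    have h10 : B 1 0 = 0 := by
      have h : B 1 0 * (d₀ - d₁') = 0 := by linear_combination e10
      rcases mul_eq_zero.mp h with h | h
      · exact h
      · exact absurd (by linarith : d₀ = d₁) hd
    have hB00 : B 0 0 = 1 := by linarith
    have hB11 : B 1 1 = 1 := by linarith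
    refine ⟨?_, hd0', hd1'⟩
    ext i j
    fin_cases i <;> fin_cases j <;>
      simp [hAentry, hB00, hB11, h01, h10]
end

section
/- Identification under strategic misreporting (Appendix B): suppose (δ, p) ∈ [0,1] × [0,1] generates the treatment distribution P₁ from the control distribution P₀ via the strategic-misreporting model, and suppose P₀(0) > 0, P₀(J) > 0, and P₁(J+1) > 0. Then δ and p are uniquely determined by the observed distributions: δ = 1 − P₁(0)/P₀(0), δ > 0, and p = 1 − P₁(J+1)/(δ·P₀(J)). -/
theorem eq_one_sub_div_of_eq_one_sub_mul {K : Type*} [Field K] {a b x : K} (ha : a ≠ 0)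
    (h : b = (1 - x) * a) : x = 1 - b / a := by
  rw [h, mul_div_cancel_right₀ _ ha, sub_sub_cancel]

theorem strategic_misreporting_identification_general
    (J : ℕ) (hJ : 1 ≤ J)
    (P₀ P₁ : ℤ → ℝ)
    (hP₀neg : P₀ (-1) = 0)
    (δ p : ℝ) (hδ : 0 ≤ δ ∧ δ ≤ 1)
    (hP₁low : ∀ j : ℤ, 0 ≤ j → j ≤ (J : ℤ) - 1 →
      P₁ j = (1 - δ) * P₀ j + δ * P₀ (j - 1))
    (hP₁top : P₁ ((J : ℤ) + 1) = δ * (1 - p) * P₀ (J : ℤ))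
    (h0pos : 0 < P₀ 0) (hJpos : 0 < P₀ (J : ℤ)) (htoppos : 0 < P₁ ((J : ℤ) + 1)) :
    δ = 1 - P₁ 0 / P₀ 0 ∧ 0 < δ ∧ p = 1 - P₁ ((J : ℤ) + 1) / (δ * P₀ (J : ℤ)) := by
  have hbottom : P₁ 0 = (1 - δ) * P₀ 0 := by
    simpa [hP₀neg] using hP₁low 0 le_rfl (by omega)
  have hδpos : 0 < δ := by
    rw [hP₁top] at htoppos
    exact hδ.1.lt_of_ne' (left_ne_zero_of_mul (left_ne_zero_of_mul htoppos.ne'))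
  have htop : P₁ ((J : ℤ) + 1) = (1 - p) * (δ * P₀ (J : ℤ)) := by
    rw [hP₁top]
    ring
  exact ⟨eq_one_sub_div_of_eq_one_sub_mul h0pos.ne' hbottom, hδpos,
    eq_one_sub_div_of_eq_one_sub_mul (mul_pos hδpos hJpos).ne' htop⟩

/-- Identification under strategic misreporting: if `(δ, p)` generates the treatment
distribution `P₁` from the control distribution `P₀` via the strategic-misreporting model
and `P₀(0) > 0`, `P₀(J) > 0`, `P₁(J+1) > 0`, then `δ = 1 − P₁(0)/P₀(0)`, `δ > 0`, and
`p = 1 − P₁(J+1)/(δ·P₀(J))`. -/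
theorem strategic_misreporting_identification
    (J : ℕ) (hJ : 1 ≤ J)
    (P₀ P₁ : ℤ → ℝ)
    (hP₀nonneg : ∀ j : ℤ, 0 ≤ j → j ≤ (J : ℤ) → 0 ≤ P₀ j)
    (hP₀sum : ∑ j ∈ Finset.Icc (0 : ℤ) (J : ℤ), P₀ j = 1)
    (hP₀neg : P₀ (-1) = 0)
    (δ p : ℝ) (hδ : 0 ≤ δ ∧ δ ≤ 1) (hp : 0 ≤ p ∧ p ≤ 1)
    (hP₁low : ∀ j : ℤ, 0 ≤ j → j ≤ (J : ℤ) - 1 →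
      P₁ j = (1 - δ) * P₀ j + δ * P₀ (j - 1))
    (hP₁J : P₁ (J : ℤ) =
      (1 - δ) * P₀ (J : ℤ) + δ * P₀ ((J : ℤ) - 1) + δ * p * P₀ (J : ℤ))
    (hP₁top : P₁ ((J : ℤ) + 1) = δ * (1 - p) * P₀ (J : ℤ))
    (h0pos : 0 < P₀ 0) (hJpos : 0 < P₀ (J : ℤ)) (htoppos : 0 < P₁ ((J : ℤ) + 1)) :
    δ = 1 - P₁ 0 / P₀ 0 ∧ 0 < δ ∧ p = 1 - P₁ ((J : ℤ) + 1) / (δ * P₀ (J : ℤ)) :=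
  strategic_misreporting_identification_general J hJ P₀ P₁ hP₀neg δ p hδ hP₁low hP₁top h0pos hJpos
    htoppos
end

section
/- In the two-component Bernoulli mixture model of the multiple response technique, if 0 < π < 1, a₀ ≠ a₁, and c₀ ≠ c₁ (so that M is invertible), then for each fixed x₂ ∈ {0,1} the observed matrix product satisfies N_{x₂}·M⁻¹ = A·D_{x₂}·A⁻¹; equivalently, each column A[·][k] of A is an eigenvector of N_{x₂}·M⁻¹ with eigenvalue b_k^{x₂}·(1−b_k)^{1−x₂} = Pr(X₂ = x₂ | X* = k). -/
/-- The Bernoulli weight `a^x · (1−a)^(1−x)` for `x ∈ {0,1}`. -/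
noncomputable def bern (a : ℝ) (x : Fin 2) : ℝ := a ^ (x : ℕ) * (1 - a) ^ (1 - (x : ℕ))

/-- The two-component Bernoulli mixture joint distribution on `{0,1}³`. -/
noncomputable def Qmix (π a₀ a₁ b₀ b₁ c₀ c₁ : ℝ) (x₁ x₂ x₃ : Fin 2) : ℝ :=
  ∑ k : Fin 2, ![1 - π, π] k * bern (![a₀, a₁] k) x₁ * bern (![b₀, b₁] k) x₂ *
    bern (![c₀, c₁] k) x₃

/-- If 0 < π < 1, a₀ ≠ a₁ and c₀ ≠ c₁ (so M is invertible), then for each fixed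
x₂ the observed matrix satisfies N_{x₂}·M⁻¹ = A·D_{x₂}·A⁻¹; equivalently each
column of A is an eigenvector of N_{x₂}·M⁻¹ with eigenvalue
Pr(X₂ = x₂ | X* = k) = bₖ^{x₂}(1−bₖ)^{1−x₂}. -/
theorem mixture_eigendecomposition
    (π a₀ a₁ b₀ b₁ c₀ c₁ : ℝ)
    (hπ : 0 < π ∧ π < 1) (ha₀ : 0 ≤ a₀ ∧ a₀ ≤ 1) (ha₁ : 0 ≤ a₁ ∧ a₁ ≤ 1)
    (hb₀ : 0 ≤ b₀ ∧ b₀ ≤ 1) (hb₁ : 0 ≤ b₁ ∧ b₁ ≤ 1)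
    (hc₀ : 0 ≤ c₀ ∧ c₀ ≤ 1) (hc₁ : 0 ≤ c₁ ∧ c₁ ≤ 1)
    (ha : a₀ ≠ a₁) (hc : c₀ ≠ c₁)
    (M A : Matrix (Fin 2) (Fin 2) ℝ) (N : Fin 2 → Matrix (Fin 2) (Fin 2) ℝ)
    (hM : M = Matrix.of fun i j => ∑ x₂ : Fin 2, Qmix π a₀ a₁ b₀ b₁ c₀ c₁ i x₂ j)
    (hN : ∀ x₂ : Fin 2, N x₂ = Matrix.of fun i j => Qmix π a₀ a₁ b₀ b₁ c₀ c₁ i x₂ j)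
    (hA : A = Matrix.of fun i k => bern (![a₀, a₁] k) i) :
    ∀ x₂ : Fin 2,
      N x₂ * M⁻¹ = A * Matrix.diagonal ![bern b₀ x₂, bern b₁ x₂] * A⁻¹ ∧
      ∀ k : Fin 2,
        (N x₂ * M⁻¹).mulVec (fun i => A i k) =
          bern (![b₀, b₁] k) x₂ • (fun i => A i k) := by
  obtain ⟨hπ0, hπ1⟩ := hπ
  set Cm : Matrix (Fin 2) (Fin 2) ℝ := Matrix.of fun j k => bern (![c₀, c₁] k) j with hCm
  set P : Matrix (Fin 2) (Fin 2) ℝ := Matrix.diagonal ![1 - π, π] with hP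
  have hAdet : A.det = a₁ - a₀ := by
    rw [hA, Matrix.det_fin_two]
    simp [bern]
    ring
  have hAunit : IsUnit A.det := by
    rw [hAdet, isUnit_iff_ne_zero]
    exact sub_ne_zero.mpr (Ne.symm ha)
  have hCdet : Cm.det = c₁ - c₀ := by
    rw [hCm, Matrix.det_fin_two]
    simp [bern]
    ring
  have hCunit : IsUnit Cm.det := by
    rw [hCdet, isUnit_iff_ne_zero]
    exact sub_ne_zero.mpr (Ne.symm hc)
  have hCTunit : IsUnit (Cm.transpose).det := by rwa [Matrix.det_transpose]
  have hPunit : IsUnit P.det := by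
    rw [hP, Matrix.det_diagonal, Fin.prod_univ_two]
    simp only [Matrix.cons_val_zero, Matrix.cons_val_one, Matrix.head_cons]
    rw [isUnit_iff_ne_zero]
    have h1 : (0:ℝ) < 1 - π := by linarith
    exact mul_ne_zero h1.ne' hπ0.ne'
  have hMfac : M = A * P * Cm.transpose := by
    rw [hM, hA]
    ext i j
    fin_cases i <;> fin_cases j <;>
      simp [Matrix.mul_apply, Fin.sum_univ_two, Qmix, bern, Matrix.diagonal, hP, hCm,
        Matrix.transpose_apply] <;> ring
  have hNfac : ∀ x₂ : Fin 2,
      N x₂ = A * (Matrix.diagonal ![bern b₀ x₂, bern b₁ x₂] * P) * Cm.transpose := by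
    intro x₂
    rw [hN, hA]
    ext i j
    fin_cases i <;> fin_cases j <;> fin_cases x₂ <;>
      simp [Matrix.mul_apply, Fin.sum_univ_two, Qmix, bern, Matrix.diagonal, hP, hCm,
        Matrix.transpose_apply] <;> ring
  have key : ∀ x₂ : Fin 2,
      N x₂ * M⁻¹ = A * Matrix.diagonal ![bern b₀ x₂, bern b₁ x₂] * A⁻¹ := by
    intro x₂
    rw [hNfac x₂, hMfac, Matrix.mul_inv_rev, Matrix.mul_inv_rev]
    simp only [Matrix.mul_assoc]
    rw [Matrix.mul_nonsing_inv_cancel_left _ _ hCTunit,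
      Matrix.mul_nonsing_inv_cancel_left _ _ hPunit]
  intro x₂
  refine ⟨key x₂, fun k => ?_⟩
  rw [key x₂]
  have hcol : (fun i => A i k) = A.mulVec (Pi.single k 1) := by
    ext i
    simp [Matrix.mulVec_single]
  have h1 : A⁻¹.mulVec (A.mulVec (Pi.single k 1)) = Pi.single k 1 := by
    rw [Matrix.mulVec_mulVec, Matrix.nonsing_inv_mul _ hAunit, Matrix.one_mulVec]
  rw [hcol, ← Matrix.mulVec_mulVec, h1, ← Matrix.mulVec_mulVec,
    Matrix.diagonal_mulVec_single, ← Matrix.mulVec_smul, mul_one]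
  have h2 : (Pi.single k (![bern b₀ x₂, bern b₁ x₂] k) : Fin 2 → ℝ) =
      bern (![b₀, b₁] k) x₂ • (Pi.single k 1 : Fin 2 → ℝ) := by
    fin_cases k <;> ext i <;> fin_cases i <;> simp [Pi.single_apply]
  rw [h2]
end

section
/- Identification of the multiple response technique (Theorem 1): let π, π' ∈ (0,1) and a₀,a₁,b₀,b₁,c₀,c₁, a₀',a₁',b₀',b₁',c₀',c₁' ∈ [0,1] satisfy a₀ < a₁, a₀' < a₁', b₀ ≠ b₁, b₀' ≠ b₁', c₀ ≠ c₁, c₀' ≠ c₁'. If the two parameter vectors induce the same mixture joint distribution, i.e. Q(x₁,x₂,x₃) = Q'(x₁,x₂,x₃) for all (x₁,x₂,x₃) ∈ {0,1}³, then π = π', a₀ = a₀', a₁ = a₁', b₀ = b₀', b₁ = b₁', c₀ = c₀', and c₁ = c₁'. That is, the probability of the sensitive trait and all conditional response probabilities are uniquely determined by the observed joint distribution of the three responses. -/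
set_option maxHeartbeats 1000000 in
/-- Identification of the multiple response technique (Theorem 1): under
Assumptions 3 and 4, the parameters of the two-component Bernoulli mixture are
uniquely determined by the observed joint distribution of the three responses. -/
theorem multiple_response_technique_identification
    (π π' a₀ a₁ b₀ b₁ c₀ c₁ a₀' a₁' b₀' b₁' c₀' c₁' : ℝ)
    (hπ : 0 < π ∧ π < 1) (hπ' : 0 < π' ∧ π' < 1)
    (ha₀ : 0 ≤ a₀ ∧ a₀ ≤ 1) (ha₁ : 0 ≤ a₁ ∧ a₁ ≤ 1)
    (hb₀ : 0 ≤ b₀ ∧ b₀ ≤ 1) (hb₁ : 0 ≤ b₁ ∧ b₁ ≤ 1)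
    (hc₀ : 0 ≤ c₀ ∧ c₀ ≤ 1) (hc₁ : 0 ≤ c₁ ∧ c₁ ≤ 1)
    (ha₀' : 0 ≤ a₀' ∧ a₀' ≤ 1) (ha₁' : 0 ≤ a₁' ∧ a₁' ≤ 1)
    (hb₀' : 0 ≤ b₀' ∧ b₀' ≤ 1) (hb₁' : 0 ≤ b₁' ∧ b₁' ≤ 1)
    (hc₀' : 0 ≤ c₀' ∧ c₀' ≤ 1) (hc₁' : 0 ≤ c₁' ∧ c₁' ≤ 1)
    (ha : a₀ < a₁) (ha' : a₀' < a₁')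
    (hb : b₀ ≠ b₁) (hb' : b₀' ≠ b₁')
    (hc : c₀ ≠ c₁) (hc' : c₀' ≠ c₁')
    (hQ : ∀ x₁ x₂ x₃ : Fin 2,
      Qmix π a₀ a₁ b₀ b₁ c₀ c₁ x₁ x₂ x₃ = Qmix π' a₀' a₁' b₀' b₁' c₀' c₁' x₁ x₂ x₃) :
    π = π' ∧ a₀ = a₀' ∧ a₁ = a₁' ∧ b₀ = b₀' ∧ b₁ = b₁' ∧ c₀ = c₀' ∧ c₁ = c₁' := by
  obtain ⟨hπ0, hπ1⟩ := hπ
  obtain ⟨hπ0', hπ1'⟩ := hπ'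
  have h001 := hQ 0 0 1
  have h010 := hQ 0 1 0
  have h011 := hQ 0 1 1
  have h100 := hQ 1 0 0
  have h101 := hQ 1 0 1
  have h110 := hQ 1 1 0
  have h111 := hQ 1 1 1
  simp only [Qmix, bern, Fin.sum_univ_two, Matrix.cons_val_zero, Matrix.cons_val_one,
    Matrix.head_cons, Fin.val_zero, Fin.val_one, pow_zero, pow_one, Nat.sub_self,
    Nat.sub_zero, one_mul, mul_one] at h001 h010 h011 h100 h101 h110 h111
  -- first moments
  have hA : (1-π)*a₀+π*a₁ = (1-π')*a₀'+π'*a₁' := by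
    linear_combination h100 + h101 + h110 + h111
  have hB : (1-π)*b₀+π*b₁ = (1-π')*b₀'+π'*b₁' := by
    linear_combination h010 + h011 + h110 + h111
  have hC : (1-π)*c₀+π*c₁ = (1-π')*c₀'+π'*c₁' := by
    linear_combination h001 + h011 + h101 + h111
  -- covariances (central mixed second moments)
  have hSab : π*(1-π)*(a₁-a₀)*(b₁-b₀) = π'*(1-π')*(a₁'-a₀')*(b₁'-b₀') := by
    linear_combination (h110 + h111) - ((1-π')*b₀'+π'*b₁')*hA - ((1-π)*a₀+π*a₁)*hB
  have hSac : π*(1-π)*(a₁-a₀)*(c₁-c₀) = π'*(1-π')*(a₁'-a₀')*(c₁'-c₀') := by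
    linear_combination (h101 + h111) - ((1-π')*c₀'+π'*c₁')*hA - ((1-π)*a₀+π*a₁)*hC
  have hSbc : π*(1-π)*(b₁-b₀)*(c₁-c₀) = π'*(1-π')*(b₁'-b₀')*(c₁'-c₀') := by
    linear_combination (h011 + h111) - ((1-π')*c₀'+π'*c₁')*hB - ((1-π)*b₀+π*b₁)*hC
  -- third central cross moment
  have hM : π*(1-π)*(1-2*π)*(a₁-a₀)*(b₁-b₀)*(c₁-c₀)
      = π'*(1-π')*(1-2*π')*(a₁'-a₀')*(b₁'-b₀')*(c₁'-c₀') := by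
    linear_combination h111
      - (((1-π)*a₀+π*a₁)*(h011 + h111) + ((1-π')*b₀'*c₀'+π'*b₁'*c₁')*hA)
      - (((1-π)*b₀+π*b₁)*(h101 + h111) + ((1-π')*a₀'*c₀'+π'*a₁'*c₁')*hB)
      - (((1-π)*c₀+π*c₁)*(h110 + h111) + ((1-π')*a₀'*b₀'+π'*a₁'*b₁')*hC)
      + 2*(((1-π)*a₀+π*a₁)*((1-π)*b₀+π*b₁)*hC
        + ((1-π)*a₀+π*a₁)*((1-π')*c₀'+π'*c₁')*hB
        + ((1-π')*b₀'+π'*b₁')*((1-π')*c₀'+π'*c₁')*hA)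
  -- abbreviations
  have hα : (0:ℝ) < a₁ - a₀ := sub_pos.2 ha
  have hα' : (0:ℝ) < a₁' - a₀' := sub_pos.2 ha'
  have hβ0 : b₁ - b₀ ≠ 0 := sub_ne_zero.2 (Ne.symm hb)
  have hγ0 : c₁ - c₀ ≠ 0 := sub_ne_zero.2 (Ne.symm hc)
  have hSbc0 : π*(1-π)*(b₁-b₀)*(c₁-c₀) ≠ 0 := by
    have h1 : π ≠ 0 := ne_of_gt hπ0
    have h2 : (1-π) ≠ 0 := ne_of_gt (by linarith)
    exact mul_ne_zero (mul_ne_zero (mul_ne_zero h1 h2) hβ0) hγ0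
  -- u v identified
  have huv : (π*(a₁-a₀))*((1-π)*(a₁-a₀)) = (π'*(a₁'-a₀'))*((1-π')*(a₁'-a₀')) := by
    have h1 : (π*(a₁-a₀))*((1-π)*(a₁-a₀)) * (π*(1-π)*(b₁-b₀)*(c₁-c₀))
        = (π'*(a₁'-a₀'))*((1-π')*(a₁'-a₀')) * (π*(1-π)*(b₁-b₀)*(c₁-c₀)) := by
      linear_combination (π*(1-π)*(a₁-a₀)*(c₁-c₀))*hSab
        + (π'*(1-π')*(a₁'-a₀')*(b₁'-b₀'))*hSac
        - ((π'*(a₁'-a₀'))*((1-π')*(a₁'-a₀')))*hSbc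
    exact mul_right_cancel₀ hSbc0 h1
  -- v - u identified
  have hm : (1-π)*(a₁-a₀) - π*(a₁-a₀) = (1-π')*(a₁'-a₀') - π'*(a₁'-a₀') := by
    have h1 : ((1-π)*(a₁-a₀) - π*(a₁-a₀)) * (π*(1-π)*(b₁-b₀)*(c₁-c₀))
        = ((1-π')*(a₁'-a₀') - π'*(a₁'-a₀')) * (π*(1-π)*(b₁-b₀)*(c₁-c₀)) := by
      linear_combination hM - ((1-π')*(a₁'-a₀') - π'*(a₁'-a₀'))*hSbc
    exact mul_right_cancel₀ hSbc0 h1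
  -- u = u' and v = v'
  have hu0 : (0:ℝ) < π*(a₁-a₀) := mul_pos hπ0 hα
  have hu0' : (0:ℝ) < π'*(a₁'-a₀') := mul_pos hπ0' hα'
  have hv0 : (0:ℝ) < (1-π)*(a₁-a₀) := mul_pos (by linarith) hα
  have hkey : (π*(a₁-a₀) - π'*(a₁'-a₀')) * ((1-π)*(a₁-a₀) + π'*(a₁'-a₀')) = 0 := by
    linear_combination huv - (π'*(a₁'-a₀'))*hm
  have hueq : π*(a₁-a₀) = π'*(a₁'-a₀') := by
    rcases mul_eq_zero.1 hkey with h | h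
    · exact sub_eq_zero.1 h
    · exact absurd h (ne_of_gt (add_pos hv0 hu0'))
  have hveq : (1-π)*(a₁-a₀) = (1-π')*(a₁'-a₀') := by linarith
  -- identify a₀, a₁, π
  have ha0eq : a₀ = a₀' := by linear_combination hA - hueq
  have ha1eq : a₁ = a₁' := by linear_combination hA + hveq
  have hαeq : a₁ - a₀ = a₁' - a₀' := by linear_combination ha1eq - ha0eq
  have hπeq : π = π' := by
    have : π * (a₁-a₀) = π' * (a₁-a₀) := by rw [hueq, hαeq]
    exact mul_right_cancel₀ (ne_of_gt hα) this
  subst hπeq; subst ha0eq; subst ha1eq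
  -- identify b's
  have hppα : π*(1-π)*(a₁-a₀) ≠ 0 := by
    have h1 : π ≠ 0 := ne_of_gt hπ0
    have h2 : (1-π) ≠ 0 := ne_of_gt (by linarith)
    exact mul_ne_zero (mul_ne_zero h1 h2) (ne_of_gt hα)
  have hβeq : b₁ - b₀ = b₁' - b₀' := by
    have h1 : (π*(1-π)*(a₁-a₀)) * (b₁-b₀) = (π*(1-π)*(a₁-a₀)) * (b₁'-b₀') := by
      linear_combination hSab
    exact mul_left_cancel₀ hppα h1
  have hb0eq : b₀ = b₀' := by linear_combination hB - π*hβeq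
  have hb1eq : b₁ = b₁' := by linear_combination hB + (1-π)*hβeq
  -- identify c's
  have hγeq : c₁ - c₀ = c₁' - c₀' := by
    have h1 : (π*(1-π)*(a₁-a₀)) * (c₁-c₀) = (π*(1-π)*(a₁-a₀)) * (c₁'-c₀') := by
      linear_combination hSac
    exact mul_left_cancel₀ hppα h1
  have hc0eq : c₀ = c₀' := by linear_combination hC - π*hγeq
  have hc1eq : c₁ = c₁' := by linear_combination hC + (1-π)*hγeq
  exact ⟨rfl, rfl, rfl, hb0eq, hb1eq, hc0eq, hc1eq⟩
end
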